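/- For the extended Bernstein-Vazirani state over Z_q: applying the (n+1)-fold QFT over Z_q to the state (1/√q^n) Σ_{x ∈ Z_q^n} |x⟩|⟨s,x⟩ mod q⟩ and measuring yields an outcome (z_1,...,z_n,z_{n+1}) with z_i = −z_{n+1}·s_i (mod q) for all i, with probability 1. Equivalently, the squared amplitude of the subspace spanned by {|−c·s⟩|c⟩ : c ∈ Z_q} in the transformed state equals 1. -/

import Mathlib

/-- The amplitude of the QFT-transformed extended Bernstein-Vazirani state at outcome
`(y, c)`: `φ(y,c) = (1/(q^n √q)) ∑_{x ∈ Z_q^n} ω^{⟨x, y + c·s⟩}`, `ω = exp(2πi/q)`. -/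
noncomputable def extBVAmp (q n : ℕ) [NeZero q] (s : Fin n → ZMod q)
    (y : Fin n → ZMod q) (c : ZMod q) : ℂ :=
  (1 / ((q : ℂ) ^ n * (Real.sqrt q : ℂ))) *
    ∑ x : Fin n → ZMod q,
      Complex.exp (2 * Real.pi * Complex.I / q) ^ ((∑ i, x i * (y i + c * s i)).val)

/-! When `y = -c • s` every phase `ω^⟨x, y + c·s⟩` is `1`, so the `q^n` terms add up
constructively and each of the `q` outcomes `(-c·s, c)` has amplitude `1/√q`. -/

lemma extBVAmp_eq_inv_sqrt_of_add_mul_eq_zero {q n : ℕ} [NeZero q] {s y : Fin n → ZMod q}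
    {c : ZMod q} (h : ∀ i, y i + c * s i = 0) :
    extBVAmp q n s y c = 1 / (Real.sqrt q : ℂ) := by
  have hq : (q : ℂ) ≠ 0 := Nat.cast_ne_zero.mpr (NeZero.ne q)
  simp only [extBVAmp, h, mul_zero, Finset.sum_const_zero, ZMod.val_zero, pow_zero,
    Finset.sum_const, Finset.card_univ, Fintype.card_fun, ZMod.card, Fintype.card_fin,
    nsmul_eq_mul, mul_one]
  push_cast
  field_simp

lemma normSq_extBVAmp_neg_mul {q n : ℕ} [NeZero q] (s : Fin n → ZMod q) (c : ZMod q) :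
    Complex.normSq (extBVAmp q n s (fun i => -(c * s i)) c) = 1 / q := by
  rw [extBVAmp_eq_inv_sqrt_of_add_mul_eq_zero fun i => neg_add_cancel _, Complex.normSq_div,
    Complex.normSq_one, Complex.normSq_ofReal, Real.mul_self_sqrt (Nat.cast_nonneg q)]

theorem extBV_success_prob_one_general (q n : ℕ) [NeZero q] (s : Fin n → ZMod q) :
    ∑ c : ZMod q, Complex.normSq (extBVAmp q n s (fun i => -(c * s i)) c) = 1 := by
  have hq : (q : ℝ) ≠ 0 := Nat.cast_ne_zero.mpr (NeZero.ne q)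
  simp only [normSq_extBVAmp_neg_mul, Finset.sum_const, Finset.card_univ, ZMod.card,
    nsmul_eq_mul, mul_one_div, div_self hq]

/-- Measuring the QFT of the extended Bernstein-Vazirani state yields an outcome of the
form `(−c·s, c)` with probability 1: the total squared amplitude on the set
`{(−c·s, c) : c ∈ Z_q}` equals 1. -/
theorem extBV_success_prob_one (q n : ℕ) [NeZero q] (hq : 2 ≤ q) (s : Fin n → ZMod q) :
    ∑ c : ZMod q, Complex.normSq (extBVAmp q n s (fun i => -(c * s i)) c) = 1 :=
  extBV_success_prob_one_general q n s
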